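/- arXiv:1706.09666 — 5 statements merged into one kernel-verified Lean document; each statement's English description precedes it below -/
import Mathlib

section
/- For every ψ, ψ' in S(ℑ), the function (u,s) ↦ ψ(u,s)·∂_uψ'(u,s) − ψ'(u,s)·∂_uψ(u,s) is integrable on ℝ×S², so that σ_ℑ(ψ,ψ') is well defined, and σ_ℑ is a bilinear antisymmetric form on S(ℑ). Moreover σ_ℑ is weakly non-degenerate: if ψ' ∈ S(ℑ) satisfies σ_ℑ(ψ,ψ') = 0 for every ψ ∈ S(ℑ), then ψ' = 0. -/
open MeasureTheory Metric Filter
open scoped Manifold Topology ENNReal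

noncomputable section

/-- Euclidean 3-space. -/
abbrev E3 : Type := EuclideanSpace ℝ (Fin 3)

/-- The unit 2-sphere in Euclidean 3-space. -/
abbrev S2 : Type := Metric.sphere (0 : E3) 1

instance : Fact (Module.finrank ℝ E3 = 2 + 1) := ⟨by simp⟩

/-- The standard (rotation-invariant, total mass 4π) surface measure on the unit sphere. -/
instance : MeasureSpace S2 := ⟨(volume : Measure E3).toSphere⟩

/-- Partial derivative in the first (`u`) variable. -/
def uderiv (ψ : ℝ × S2 → ℝ) : ℝ × S2 → ℝ := fun p => deriv (fun u => ψ (u, p.2)) p.1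

/-- Membership in `S(ℑ)`: smooth real functions on `ℝ × S²` that are square integrable
together with their `u`-derivative. -/
def InSIm (ψ : ℝ × S2 → ℝ) : Prop :=
  ContMDiff ((𝓘(ℝ, ℝ)).prod (𝓡 2)) 𝓘(ℝ, ℝ) (⊤ : ℕ∞) ψ ∧
  MemLp ψ 2 (volume : Measure (ℝ × S2)) ∧
  MemLp (uderiv ψ) 2 (volume : Measure (ℝ × S2))

/-- The boundary symplectic form `σ_ℑ`. -/
def sigmaIm (ψ ψ' : ℝ × S2 → ℝ) : ℝ :=
  ∫ p : ℝ × S2, (ψ p * uderiv ψ' p - ψ' p * uderiv ψ p)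

/-!
Integrability is Cauchy–Schwarz, as `ψ` and `∂_u ψ'` lie in `L²`; antisymmetry and bilinearity
are pointwise identities of the integrand, `uderiv` being linear on functions with
differentiable `u`-slices. For non-degeneracy, test `ψ'` against `ψ = arctan(u) ψ'`, which stays
in `S(ℑ)` because `arctan` and its derivative are bounded. The integrand then collapses to
`-ψ'² / (1 + u²)`, so `σ_ℑ(ψ, ψ') = 0` forces `ψ' = 0` almost everywhere, hence everywhere by
continuity, since the measure on `ℝ × S²` charges every nonempty open set.
-/

open Real

instance : IsFiniteMeasure (volume : Measure S2) :=
  inferInstanceAs (IsFiniteMeasure (volume : Measure E3).toSphere)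

instance : (volume : Measure S2).IsOpenPosMeasure :=
  inferInstanceAs (volume : Measure E3).toSphere.IsOpenPosMeasure

theorem Continuous.eq_zero_of_integral_mul_sq_eq_zero {X : Type*} [TopologicalSpace X]
    [MeasurableSpace X] {μ : Measure X} [μ.IsOpenPosMeasure] {w f : X → ℝ}
    (hf : Continuous f) (hw : ∀ x, 0 < w x) (hint : Integrable (fun x => w x * f x ^ 2) μ)
    (h0 : ∫ x, w x * f x ^ 2 ∂μ = 0) : f = 0 := by
  have hae : (fun x => w x * f x ^ 2) =ᵐ[μ] 0 :=
    (integral_eq_zero_iff_of_nonneg (fun x => by have := hw x; positivity) hint).mp h0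
  refine (hf.ae_eq_iff_eq μ continuous_zero).mp ?_
  filter_upwards [hae] with x hx
  simpa [(hw x).ne'] using hx

namespace InSIm

variable {ψ ψ₁ ψ₂ : ℝ × S2 → ℝ}

theorem differentiable_slice (hψ : InSIm ψ) (s : S2) :
    Differentiable ℝ fun u => ψ (u, s) :=
  (hψ.1.comp (contMDiff_id.prodMk contMDiff_const)).contDiff.differentiable (by simp)

theorem integrable_mul_uderiv (hψ₁ : InSIm ψ₁) (hψ₂ : InSIm ψ₂) :
    Integrable (fun p => ψ₁ p * uderiv ψ₂ p) :=
  hψ₁.2.1.integrable_mul hψ₂.2.2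

theorem integrable_sigmaIm_integrand (hψ₁ : InSIm ψ₁) (hψ₂ : InSIm ψ₂) :
    Integrable (fun p => ψ₁ p * uderiv ψ₂ p - ψ₂ p * uderiv ψ₁ p) :=
  (hψ₁.integrable_mul_uderiv hψ₂).sub (hψ₂.integrable_mul_uderiv hψ₁)

end InSIm

theorem uderiv_add {ψ₁ ψ₂ : ℝ × S2 → ℝ} (hψ₁ : InSIm ψ₁) (hψ₂ : InSIm ψ₂) :
    uderiv (ψ₁ + ψ₂) = uderiv ψ₁ + uderiv ψ₂ :=
  funext fun p =>
    deriv_fun_add (hψ₁.differentiable_slice p.2 p.1) (hψ₂.differentiable_slice p.2 p.1)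

theorem uderiv_smul (c : ℝ) (ψ : ℝ × S2 → ℝ) : uderiv (c • ψ) = c • uderiv ψ :=
  funext fun _ => deriv_const_mul_field c

theorem uderiv_fst_mul {χ : ℝ → ℝ} {ψ : ℝ × S2 → ℝ} (hχ : Differentiable ℝ χ) (hψ : InSIm ψ) :
    uderiv (fun p => χ p.1 * ψ p) = fun p => deriv χ p.1 * ψ p + χ p.1 * uderiv ψ p :=
  funext fun p => deriv_fun_mul (hχ p.1) (hψ.differentiable_slice p.2 p.1)

theorem memLp_top_comp_fst {χ : ℝ → ℝ} (hχ : Continuous χ) {C : ℝ} (hC : ∀ u, ‖χ u‖ ≤ C) :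
    MemLp (fun p : ℝ × S2 => χ p.1) ∞ :=
  memLp_top_of_bound (hχ.comp continuous_fst).aestronglyMeasurable C (ae_of_all _ fun p => hC p.1)

theorem InSIm.fst_mul {χ : ℝ → ℝ} {ψ : ℝ × S2 → ℝ} (hχ : ContDiff ℝ (⊤ : ℕ∞) χ) {C C' : ℝ}
    (hC : ∀ u, ‖χ u‖ ≤ C) (hC' : ∀ u, ‖deriv χ u‖ ≤ C') (hψ : InSIm ψ) :
    InSIm fun p => χ p.1 * ψ p := by
  have hχ_bdd := memLp_top_comp_fst hχ.continuous hC
  have hχ'_bdd := memLp_top_comp_fst (hχ.continuous_deriv (by simp)) hC'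
  refine ⟨(hχ.contMDiff.comp contMDiff_fst).mul hψ.1, hψ.2.1.mul' hχ_bdd, ?_⟩
  rw [uderiv_fst_mul (hχ.differentiable (by simp)) hψ]
  exact (hψ.2.1.mul' hχ'_bdd).add (hψ.2.2.mul' hχ_bdd)

theorem sigmaIm_antisymm (ψ ψ' : ℝ × S2 → ℝ) : sigmaIm ψ ψ' = -sigmaIm ψ' ψ := by
  rw [sigmaIm, sigmaIm, ← integral_neg]
  congr 1 with p
  ring

theorem sigmaIm_add_left {ψ₁ ψ₂ ψ' : ℝ × S2 → ℝ} (h₁ : InSIm ψ₁) (h₂ : InSIm ψ₂) (h' : InSIm ψ') :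
    sigmaIm (ψ₁ + ψ₂) ψ' = sigmaIm ψ₁ ψ' + sigmaIm ψ₂ ψ' := by
  rw [sigmaIm, sigmaIm, sigmaIm, uderiv_add h₁ h₂, ← integral_add
    (h₁.integrable_sigmaIm_integrand h') (h₂.integrable_sigmaIm_integrand h')]
  congr 1 with p
  simp only [Pi.add_apply]
  ring

theorem sigmaIm_smul_left (c : ℝ) (ψ ψ' : ℝ × S2 → ℝ) :
    sigmaIm (c • ψ) ψ' = c * sigmaIm ψ ψ' := by
  rw [sigmaIm, sigmaIm, uderiv_smul, ← smul_eq_mul, ← integral_smul]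
  congr 1 with p
  simp only [Pi.smul_apply, smul_eq_mul]
  ring

theorem sigmaIm_add_right {ψ ψ₁' ψ₂' : ℝ × S2 → ℝ} (h : InSIm ψ) (h₁ : InSIm ψ₁') (h₂ : InSIm ψ₂') :
    sigmaIm ψ (ψ₁' + ψ₂') = sigmaIm ψ ψ₁' + sigmaIm ψ ψ₂' := by
  rw [sigmaIm_antisymm, sigmaIm_add_left h₁ h₂ h, sigmaIm_antisymm ψ₁', sigmaIm_antisymm ψ₂']
  ring

theorem sigmaIm_smul_right (c : ℝ) (ψ ψ' : ℝ × S2 → ℝ) :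
    sigmaIm ψ (c • ψ') = c * sigmaIm ψ ψ' := by
  rw [sigmaIm_antisymm, sigmaIm_smul_left, sigmaIm_antisymm ψ']
  ring

theorem sigmaIm_fst_mul_self {χ : ℝ → ℝ} {ψ : ℝ × S2 → ℝ} (hχ : Differentiable ℝ χ)
    (hψ : InSIm ψ) : sigmaIm (fun p => χ p.1 * ψ p) ψ = -∫ p, deriv χ p.1 * ψ p ^ 2 := by
  rw [sigmaIm, uderiv_fst_mul hχ hψ, ← integral_neg]
  congr 1 with p
  ring

theorem InSIm.eq_zero_of_sigmaIm_eq_zero {ψ' : ℝ × S2 → ℝ} (hψ' : InSIm ψ')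
    (h : ∀ ψ, InSIm ψ → sigmaIm ψ ψ' = 0) : ψ' = 0 := by
  have hweight : ∀ u : ℝ, ‖1 / (1 + u ^ 2)‖ ≤ 1 := fun u => by
    rw [norm_of_nonneg (by positivity)]
    exact div_le_one_of_le₀ (by nlinarith [sq_nonneg u]) (by positivity)
  have harctan : ∀ u, ‖arctan u‖ ≤ π / 2 := fun u =>
    abs_le.mpr ⟨(neg_pi_div_two_lt_arctan u).le, (arctan_lt_pi_div_two u).le⟩
  have htest :=
    h _ (hψ'.fst_mul contDiff_arctan harctan (by simpa [Real.deriv_arctan] using hweight))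
  rw [sigmaIm_fst_mul_self differentiable_arctan hψ', Real.deriv_arctan, neg_eq_zero] at htest
  refine hψ'.1.continuous.eq_zero_of_integral_mul_sq_eq_zero (fun _ => by positivity) ?_ htest
  exact hψ'.2.1.integrable_sq.bdd_mul (by fun_prop : Measurable _).aestronglyMeasurable
    (ae_of_all _ fun p => hweight p.1)

/-- For all `ψ, ψ' ∈ S(ℑ)` the integrand of `σ_ℑ` is integrable, `σ_ℑ` is a bilinear
antisymmetric form on `S(ℑ)`, and it is weakly non-degenerate. -/
theorem sigmaIm_wellDefined_bilinear_antisymm_nondegenerate :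
    (∀ ψ ψ' : ℝ × S2 → ℝ, InSIm ψ → InSIm ψ' →
      Integrable (fun p : ℝ × S2 => ψ p * uderiv ψ' p - ψ' p * uderiv ψ p)
        (volume : Measure (ℝ × S2))) ∧
    (∀ ψ ψ' : ℝ × S2 → ℝ, InSIm ψ → InSIm ψ' → sigmaIm ψ ψ' = - sigmaIm ψ' ψ) ∧
    (∀ ψ₁ ψ₂ ψ' : ℝ × S2 → ℝ, InSIm ψ₁ → InSIm ψ₂ → InSIm ψ' →
      sigmaIm (ψ₁ + ψ₂) ψ' = sigmaIm ψ₁ ψ' + sigmaIm ψ₂ ψ') ∧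
    (∀ (c : ℝ) (ψ ψ' : ℝ × S2 → ℝ), InSIm ψ → InSIm ψ' →
      sigmaIm (c • ψ) ψ' = c * sigmaIm ψ ψ') ∧
    (∀ ψ ψ₁' ψ₂' : ℝ × S2 → ℝ, InSIm ψ → InSIm ψ₁' → InSIm ψ₂' →
      sigmaIm ψ (ψ₁' + ψ₂') = sigmaIm ψ ψ₁' + sigmaIm ψ ψ₂') ∧
    (∀ (c : ℝ) (ψ ψ' : ℝ × S2 → ℝ), InSIm ψ → InSIm ψ' →
      sigmaIm ψ (c • ψ') = c * sigmaIm ψ ψ') ∧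
    (∀ ψ' : ℝ × S2 → ℝ, InSIm ψ' → (∀ ψ : ℝ × S2 → ℝ, InSIm ψ → sigmaIm ψ ψ' = 0) →
      ψ' = 0) :=
  ⟨fun _ _ hψ hψ' => hψ.integrable_sigmaIm_integrand hψ',
    fun ψ ψ' _ _ => sigmaIm_antisymm ψ ψ',
    fun _ _ _ h₁ h₂ h' => sigmaIm_add_left h₁ h₂ h',
    fun c ψ ψ' _ _ => sigmaIm_smul_left c ψ ψ',
    fun _ _ _ h h₁ h₂ => sigmaIm_add_right h h₁ h₂,
    fun c ψ ψ' _ _ => sigmaIm_smul_right c ψ ψ',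
    fun _ hψ' h => hψ'.eq_zero_of_sigmaIm_eq_zero h⟩
end
end

section
/- Let A, A' ∈ SL(2,ℂ) and f, f' : ℂ → ℝ. For (u,ζ) ∈ ℝ×ℂ with c_A·ζ + d_A ≠ 0, define γ_{(A,f)}(u,ζ) := (K_A(ζ)·(u + f(ζ)), A·ζ). If moreover c_{A'}·(A·ζ) + d_{A'} ≠ 0, then also c_{A'A}·ζ + d_{A'A} ≠ 0 and γ_{(A',f')}(γ_{(A,f)}(u,ζ)) = γ_{(A'A, g)}(u,ζ), where g(ζ) := f(ζ) + K_{A⁻¹}(A·ζ)·f'(A·ζ). This is the BMS semidirect-product composition law (Λ',f') ⊙ (Λ,f) = (Λ'Λ, f + (K_{Λ⁻¹}∘Λ)·(f'∘Λ)). -/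
open Matrix

noncomputable section

/-- `SL(2,ℂ)`. -/
abbrev SL2C := Matrix.SpecialLinearGroup (Fin 2) ℂ

/-- `P_A(ζ) = |aζ+b|² + |cζ+d|²`. -/
def Pfac (A : SL2C) (ζ : ℂ) : ℝ :=
  ‖(A : Matrix (Fin 2) (Fin 2) ℂ) 0 0 * ζ + (A : Matrix (Fin 2) (Fin 2) ℂ) 0 1‖ ^ 2 +
  ‖(A : Matrix (Fin 2) (Fin 2) ℂ) 1 0 * ζ + (A : Matrix (Fin 2) (Fin 2) ℂ) 1 1‖ ^ 2

/-- The BMS conformal factor `K_A(ζ) = (1+|ζ|²)/P_A(ζ)`. -/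
def Kfac (A : SL2C) (ζ : ℂ) : ℝ := (1 + ‖ζ‖ ^ 2) / Pfac A ζ

/-- The Möbius action `A·ζ = (aζ+b)/(cζ+d)`. -/
def moeb (A : SL2C) (ζ : ℂ) : ℂ :=
  ((A : Matrix (Fin 2) (Fin 2) ℂ) 0 0 * ζ + (A : Matrix (Fin 2) (Fin 2) ℂ) 0 1) /
  ((A : Matrix (Fin 2) (Fin 2) ℂ) 1 0 * ζ + (A : Matrix (Fin 2) (Fin 2) ℂ) 1 1)

/-- The BMS action on `ℝ × ℂ` in a Bondi frame:
`γ_{(A,f)}(u,ζ) = (K_A(ζ)·(u + f(ζ)), A·ζ)`. -/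
def gammaBMS (A : SL2C) (f : ℂ → ℝ) : ℝ × ℂ → ℝ × ℂ :=
  fun p => (Kfac A p.2 * (p.1 + f p.2), moeb A p.2)

/-!
`P_A(ζ) = |j_A(ζ)|² (1 + |A·ζ|²)` with `j_A(ζ) = cζ+d`, and `j` is a cocycle,
`j_{A'A}(ζ) = j_{A'}(A·ζ) j_A(ζ)`. Hence `K_A(ζ) = (1+|ζ|²)/(|j_A(ζ)|²(1+|A·ζ|²))` is a
multiplicative cocycle too, `K_{A'A}(ζ) = K_{A'}(A·ζ) K_A(ζ)`, and taking `A' = A⁻¹` gives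
`K_{A⁻¹}(A·ζ) K_A(ζ) = 1`. The time component of the composition law is then linear algebra.
-/

namespace SL2C

def moebNum (A : SL2C) (ζ : ℂ) : ℂ :=
  (A : Matrix (Fin 2) (Fin 2) ℂ) 0 0 * ζ + (A : Matrix (Fin 2) (Fin 2) ℂ) 0 1

def moebDen (A : SL2C) (ζ : ℂ) : ℂ :=
  (A : Matrix (Fin 2) (Fin 2) ℂ) 1 0 * ζ + (A : Matrix (Fin 2) (Fin 2) ℂ) 1 1

variable (A A' : SL2C) {ζ : ℂ}

lemma moeb_eq_div : moeb A ζ = moebNum A ζ / moebDen A ζ := rfl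

lemma Pfac_eq : Pfac A ζ = ‖moebNum A ζ‖ ^ 2 + ‖moebDen A ζ‖ ^ 2 := rfl

lemma det_eq_one : (A : Matrix (Fin 2) (Fin 2) ℂ) 0 0 * (A : Matrix (Fin 2) (Fin 2) ℂ) 1 1 -
    (A : Matrix (Fin 2) (Fin 2) ℂ) 0 1 * (A : Matrix (Fin 2) (Fin 2) ℂ) 1 0 = 1 := by
  rw [← Matrix.det_fin_two]; exact A.2

lemma coe_mul_apply (i j : Fin 2) : ((A' * A : SL2C) : Matrix (Fin 2) (Fin 2) ℂ) i j =
    (A' : Matrix (Fin 2) (Fin 2) ℂ) i 0 * (A : Matrix (Fin 2) (Fin 2) ℂ) 0 j +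
      (A' : Matrix (Fin 2) (Fin 2) ℂ) i 1 * (A : Matrix (Fin 2) (Fin 2) ℂ) 1 j := by
  rw [Matrix.SpecialLinearGroup.coe_mul, Matrix.mul_apply, Fin.sum_univ_two]

lemma moebNum_mul (h : moebDen A ζ ≠ 0) :
    moebNum (A' * A) ζ = moebNum A' (moeb A ζ) * moebDen A ζ := by
  simp only [moebNum, moebDen, moeb, coe_mul_apply] at h ⊢
  field_simp
  ring

lemma moebDen_mul (h : moebDen A ζ ≠ 0) :
    moebDen (A' * A) ζ = moebDen A' (moeb A ζ) * moebDen A ζ := by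
  simp only [moebDen, moeb, coe_mul_apply] at h ⊢
  field_simp
  ring

lemma moeb_mul (h : moebDen A ζ ≠ 0) : moeb (A' * A) ζ = moeb A' (moeb A ζ) := by
  rw [moeb_eq_div, moeb_eq_div A', moebNum_mul A A' h, moebDen_mul A A' h,
    mul_div_mul_right _ _ h]

/-- Since `det A = 1`, `aζ + b` and `cζ + d` cannot vanish together. -/
lemma Pfac_pos (ζ : ℂ) : 0 < Pfac A ζ := by
  have hne : moebNum A ζ ≠ 0 ∨ moebDen A ζ ≠ 0 := by
    by_contra! ⟨hnum, hden⟩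
    rw [moebNum] at hnum
    rw [moebDen] at hden
    have : (1 : ℂ) = 0 := by
      linear_combination -det_eq_one A + (A : Matrix (Fin 2) (Fin 2) ℂ) 0 0 * hden -
        (A : Matrix (Fin 2) (Fin 2) ℂ) 1 0 * hnum
    exact one_ne_zero this
  rw [Pfac_eq]
  rcases hne with h | h
  · have := norm_pos_iff.mpr h; positivity
  · have := norm_pos_iff.mpr h; positivity

lemma one_add_norm_moeb_sq (h : moebDen A ζ ≠ 0) :
    1 + ‖moeb A ζ‖ ^ 2 = Pfac A ζ / ‖moebDen A ζ‖ ^ 2 := by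
  have : ‖moebDen A ζ‖ ≠ 0 := norm_ne_zero_iff.mpr h
  rw [moeb_eq_div, norm_div, Pfac_eq]
  field_simp
  ring

lemma Pfac_mul (h : moebDen A ζ ≠ 0) :
    Pfac (A' * A) ζ = Pfac A' (moeb A ζ) * ‖moebDen A ζ‖ ^ 2 := by
  rw [Pfac_eq, Pfac_eq, moebNum_mul A A' h, moebDen_mul A A' h, norm_mul, norm_mul]
  ring

lemma Kfac_mul (h : moebDen A ζ ≠ 0) :
    Kfac (A' * A) ζ = Kfac A' (moeb A ζ) * Kfac A ζ := by
  have := Pfac_pos A ζ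
  have := Pfac_pos A' (moeb A ζ)
  have : ‖moebDen A ζ‖ ≠ 0 := norm_ne_zero_iff.mpr h
  rw [Kfac, Kfac, Kfac, Pfac_mul A A' h, one_add_norm_moeb_sq A h]
  field_simp

lemma Kfac_one (ζ : ℂ) : Kfac 1 ζ = 1 := by
  have : ‖ζ‖ ^ 2 + 1 ≠ 0 := by positivity
  simp [Kfac, Pfac, add_comm, this]

lemma Kfac_inv_moeb_mul_Kfac (h : moebDen A ζ ≠ 0) : Kfac A⁻¹ (moeb A ζ) * Kfac A ζ = 1 := by
  rw [← Kfac_mul A A⁻¹ h, inv_mul_cancel, Kfac_one]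

end SL2C

open SL2C in
/-- The BMS semidirect-product composition law:
`γ_{(A',f')} ∘ γ_{(A,f)} = γ_{(A'A, f + (K_{A⁻¹}∘A)·(f'∘A))}` at regular points. -/
theorem gammaBMS_comp (A A' : SL2C) (f f' : ℂ → ℝ) (u : ℝ) (ζ : ℂ)
    (h1 : (A : Matrix (Fin 2) (Fin 2) ℂ) 1 0 * ζ + (A : Matrix (Fin 2) (Fin 2) ℂ) 1 1 ≠ 0)
    (h2 : (A' : Matrix (Fin 2) (Fin 2) ℂ) 1 0 * moeb A ζ +
      (A' : Matrix (Fin 2) (Fin 2) ℂ) 1 1 ≠ 0) :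
    ((A' * A : SL2C) : Matrix (Fin 2) (Fin 2) ℂ) 1 0 * ζ +
      ((A' * A : SL2C) : Matrix (Fin 2) (Fin 2) ℂ) 1 1 ≠ 0 ∧
    gammaBMS A' f' (gammaBMS A f (u, ζ)) =
      gammaBMS (A' * A) (fun z => f z + Kfac A⁻¹ (moeb A z) * f' (moeb A z)) (u, ζ) := by
  have hden : moebDen (A' * A) ζ ≠ 0 := by
    rw [moebDen_mul A A' h1]
    exact mul_ne_zero h2 h1
  refine ⟨hden, Prod.ext ?_ (moeb_mul A A' h1).symm⟩
  simp only [gammaBMS, Kfac_mul A A' h1]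
  linear_combination (-(Kfac A' (moeb A ζ) * f' (moeb A ζ))) * Kfac_inv_moeb_mul_Kfac A h1
end
end

section
/- For all functions a, a', b, b' : S² → ℝ and all rotations R, R' ∈ SO(3): F_{(a,b,R)} ∘ F_{(a',b',R')} = F_{(a' + a∘R', e^{a∘R'}·b' + b∘R', R·R')} as maps ℝ×S² → ℝ×S², where (a∘R')(s) := a(R'·s) and (e^{a∘R'}·b')(s) := e^{a(R'·s)}·b'(s). In particular the composition of two elements of the horizon symmetry group SG is again an element of SG, with parameter composition (R,a,b) ⊙ (R',a',b') = (RR', a' + a∘R', e^{a∘R'}·b' + b∘R'). -/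
open Metric Matrix

noncomputable section

open scoped Classical in
/-- The action of a matrix on the unit sphere, `s ↦ R·s` (with a junk value if the matrix
does not preserve the sphere; for `R ∈ SO(3)` the first branch is always taken and this is
the genuine rotation action). -/
def sphereRot (R : Matrix (Fin 3) (Fin 3) ℝ) (s : S2) : S2 :=
  if h : ((EuclideanSpace.equiv (Fin 3) ℝ).symm
      (R.mulVec (EuclideanSpace.equiv (Fin 3) ℝ (s : E3)))) ∈ Metric.sphere (0 : E3) 1
  then ⟨_, h⟩ else s

/-- The horizon symmetry map `F_{(a,b,R)}(u,s) = (e^{a(s)}·u + b(s), R·s)`. -/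
def FMap (a b : S2 → ℝ) (R : Matrix (Fin 3) (Fin 3) ℝ) : ℝ × S2 → ℝ × S2 :=
  fun p => (Real.exp (a p.2) * p.1 + b p.2, sphereRot R p.2)

theorem norm_equiv_symm_mulVec {n : Type*} [Fintype n] [DecidableEq n] {R : Matrix n n ℝ}
    (hR : Rᵀ * R = 1) (x : EuclideanSpace ℝ n) :
    ‖(EuclideanSpace.equiv n ℝ).symm (R *ᵥ EuclideanSpace.equiv n ℝ x)‖ = ‖x‖ := by
  rw [← sq_eq_sq₀ (norm_nonneg _) (norm_nonneg _), ← real_inner_self_eq_norm_sq,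
    ← real_inner_self_eq_norm_sq, EuclideanSpace.inner_eq_star_dotProduct,
    EuclideanSpace.inner_eq_star_dotProduct]
  simp only [star_trivial]
  show (R *ᵥ x.ofLp) ⬝ᵥ (R *ᵥ x.ofLp) = x.ofLp ⬝ᵥ x.ofLp
  rw [dotProduct_mulVec, vecMul_mulVec, hR, vecMul_one]

theorem transpose_mul_self_mul {n : Type*} [Fintype n] [DecidableEq n] {R R' : Matrix n n ℝ}
    (hR : Rᵀ * R = 1) (hR' : R'ᵀ * R' = 1) : (R * R')ᵀ * (R * R') = 1 := by
  rw [transpose_mul, Matrix.mul_assoc, ← Matrix.mul_assoc Rᵀ, hR, Matrix.one_mul, hR']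

theorem coe_sphereRot {R : Matrix (Fin 3) (Fin 3) ℝ} (hR : Rᵀ * R = 1) (s : S2) :
    (sphereRot R s : E3) =
      (EuclideanSpace.equiv (Fin 3) ℝ).symm (R *ᵥ EuclideanSpace.equiv (Fin 3) ℝ s) := by
  have hmem : (EuclideanSpace.equiv (Fin 3) ℝ).symm (R *ᵥ EuclideanSpace.equiv (Fin 3) ℝ s) ∈
      sphere (0 : E3) 1 := by
    rw [mem_sphere_zero_iff_norm, norm_equiv_symm_mulVec hR, ← mem_sphere_zero_iff_norm]
    exact s.2
  rw [sphereRot, dif_pos hmem]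

theorem sphereRot_mul {R R' : Matrix (Fin 3) (Fin 3) ℝ} (hR : Rᵀ * R = 1) (hR' : R'ᵀ * R' = 1)
    (s : S2) : sphereRot (R * R') s = sphereRot R (sphereRot R' s) := by
  ext1
  rw [coe_sphereRot (transpose_mul_self_mul hR hR'), coe_sphereRot hR, coe_sphereRot hR']
  simp only [ContinuousLinearEquiv.apply_symm_apply, mulVec_mulVec]

theorem FMap_comp_general (a a' b b' : S2 → ℝ) (R R' : Matrix (Fin 3) (Fin 3) ℝ)
    (hR : Rᵀ * R = 1) (hR' : R'ᵀ * R' = 1) :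
    FMap a b R ∘ FMap a' b' R' =
      FMap (fun s => a' s + a (sphereRot R' s))
        (fun s => Real.exp (a (sphereRot R' s)) * b' s + b (sphereRot R' s))
        (R * R') := by
  funext ⟨u, s⟩
  refine Prod.ext ?_ (sphereRot_mul hR hR' s).symm
  simp only [Function.comp_apply, FMap, Real.exp_add]
  ring

/-- Composition law of the horizon symmetry group `SG`:
`F_{(a,b,R)} ∘ F_{(a',b',R')} = F_{(a' + a∘R', e^{a∘R'}·b' + b∘R', R·R')}`. -/
theorem FMap_comp (a a' b b' : S2 → ℝ) (R R' : Matrix (Fin 3) (Fin 3) ℝ)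
    (hR : Rᵀ * R = 1) (hRdet : R.det = 1)
    (hR' : R'ᵀ * R' = 1) (hR'det : R'.det = 1) :
    FMap a b R ∘ FMap a' b' R' =
      FMap (fun s => a' s + a (sphereRot R' s))
        (fun s => Real.exp (a (sphereRot R' s)) * b' s + b (sphereRot R' s))
        (R * R') :=
  FMap_comp_general a a' b b' R R' hR hR'
end
end

section
/- Let α, β : S² → ℝ be continuous. Define g : ℝ×ℝ → ℝ by g(t,x) = (e^{tx} − 1)/x for x ≠ 0 and g(t,0) = t, and φ_t : ℝ×S² → ℝ×S² by φ_t(u,s) = (e^{t·α(s)}·u + β(s)·g(t,α(s)), s). Then: (i) φ_0 is the identity; (ii) φ_{t+t'} = φ_t ∘ φ_{t'} for all t, t' ∈ ℝ; (iii) each φ_t equals F_{(t·α, β·g(t,α(·)), 1)} and hence belongs to the horizon symmetry group SG; (iv) for every (u,s), the function t ↦ e^{t·α(s)}·u + β(s)·g(t,α(s)) is differentiable with derivative α(s)·(e^{t·α(s)}·u + β(s)·g(t,α(s))) + β(s). Thus the vector field (β(s) + u·α(s))·∂_u on ℝ×S² is complete and its flow is a one-parameter subgroup of SG. -/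
open Metric Matrix

noncomputable section

/-- `g(t,x) = (e^{tx} − 1)/x` for `x ≠ 0`, `g(t,0) = t`. -/
def gfun (t x : ℝ) : ℝ := if x = 0 then t else (Real.exp (t * x) - 1) / x

/-- The flow `φ_t(u,s) = (e^{t·α(s)}·u + β(s)·g(t,α(s)), s)` of the vector field
`(β + u·α)∂_u` on `ℝ×S²`. -/
def phiFlow (α β : S2 → ℝ) (t : ℝ) : ℝ × S2 → ℝ × S2 :=
  fun p => (Real.exp (t * α p.2) * p.1 + β p.2 * gfun t (α p.2), p.2)

lemma gfun_zero (x : ℝ) : gfun 0 x = 0 := by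
  unfold gfun; split <;> simp

lemma gfun_add (t t' x : ℝ) : gfun (t + t') x = Real.exp (t * x) * gfun t' x + gfun t x := by
  unfold gfun
  split_ifs with h
  · subst h; simp [add_comm]
  · field_simp
    rw [add_mul, Real.exp_add]
    ring

lemma sphereRot_one (s : S2) : sphereRot 1 s = s := by
  unfold sphereRot
  have hm : ((EuclideanSpace.equiv (Fin 3) ℝ).symm
      ((1 : Matrix (Fin 3) (Fin 3) ℝ).mulVec (EuclideanSpace.equiv (Fin 3) ℝ (s : E3)))) = (s : E3) := by
    simp [Matrix.one_mulVec]
  rw [dif_pos (by rw [hm]; exact s.2)]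
  exact Subtype.ext hm

lemma hasDerivAt_gfun (x c u t : ℝ) :
    HasDerivAt (fun τ => Real.exp (τ * x) * u + c * gfun τ x)
      (x * (Real.exp (t * x) * u + c * gfun t x) + c) t := by
  by_cases h : x = 0
  · subst h
    simp only [mul_zero, Real.exp_zero, one_mul, gfun, if_pos rfl, zero_mul, zero_add]
    simpa using ((hasDerivAt_id t).const_mul c).const_add u
  · have he : HasDerivAt (fun τ : ℝ => Real.exp (τ * x)) (Real.exp (t * x) * x) t := by
      simpa using (((hasDerivAt_id t).mul_const x).exp)
    have : HasDerivAt (fun τ => Real.exp (τ * x) * u + c * ((Real.exp (τ * x) - 1) / x))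
        (Real.exp (t * x) * x * u + c * (Real.exp (t * x) * x / x)) t :=
      (he.mul_const u).add (((he.sub_const 1).div_const x).const_mul c)
    have heq : (fun τ => Real.exp (τ * x) * u + c * ((Real.exp (τ * x) - 1) / x))
        = fun τ => Real.exp (τ * x) * u + c * gfun τ x := by
      funext τ; rw [gfun, if_neg h]
    rw [heq] at this
    convert this using 1
    rw [gfun, if_neg h]
    field_simp
    ring

/-- The vector field `(β(s) + u·α(s))·∂_u` on `ℝ×S²` is complete: its flow `φ_t` is a
one-parameter group of elements of the horizon symmetry group `SG`. -/
theorem phiFlow_one_parameter_subgroup (α β : S2 → ℝ)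
    (hα : Continuous α) (hβ : Continuous β) :
    phiFlow α β 0 = id ∧
    (∀ t t' : ℝ, phiFlow α β (t + t') = phiFlow α β t ∘ phiFlow α β t') ∧
    (∀ t : ℝ, phiFlow α β t =
      FMap (fun s => t * α s) (fun s => β s * gfun t (α s)) (1 : Matrix (Fin 3) (Fin 3) ℝ)) ∧
    (∀ (u : ℝ) (s : S2) (t : ℝ),
      HasDerivAt (fun τ => Real.exp (τ * α s) * u + β s * gfun τ (α s))
        (α s * (Real.exp (t * α s) * u + β s * gfun t (α s)) + β s) t) := by
  refine ⟨?_, ?_, ?_, ?_⟩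
  · funext p
    simp [phiFlow, gfun_zero]
  · intro t t'
    funext p
    simp only [phiFlow, Function.comp_apply, gfun_add, Real.exp_add, add_mul, Prod.mk.injEq]
    exact ⟨by ring, trivial⟩
  · intro t
    funext p
    simp [phiFlow, FMap, sphereRot_one]
  · intro u s t
    exact hasDerivAt_gfun (α s) (β s) u t
end
end

section
/- Let S be a real vector space, σ an antisymmetric ℝ-bilinear form on S, and μ a symmetric positive-definite ℝ-bilinear form on S satisfying (1/4)·σ(x,y)² ≤ μ(x,x)·μ(y,y) for all x, y ∈ S. Suppose (K, H) and (K', H') are two pairs, each consisting of a complex Hilbert space and an ℝ-linear map K : S → H (resp. K' : S → H') such that the ℂ-linear span of the image is dense and ⟨K x, K y⟩ = μ(x,y) + (i/2)σ(x,y) = ⟨K' x, K' y⟩ for all x, y ∈ S. Then there exists a surjective ℂ-linear isometry V : H → H' such that V(K x) = K' x for all x ∈ S. -/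
/-! Since `⟪K x, K y⟫ = ⟪K' x, K' y⟫`, the assignment `∑ cᵢ • K xᵢ ↦ ∑ cᵢ • K' xᵢ` is well defined
and norm-preserving between the complex spans of the ranges of `K` and `K'`, and it is onto. Both
spans are dense, so it extends by continuity to a linear isometric equivalence `H ≃ H'`. -/

open Finsupp Submodule

namespace LinearMap

variable {𝕜 X E F : Type*} [NormedField 𝕜] [AddCommGroup X] [Module 𝕜 X]
  [NormedAddCommGroup E] [NormedSpace 𝕜 E] [NormedAddCommGroup F] [NormedSpace 𝕜 F]
  {T : X →ₗ[𝕜] E} {U : X →ₗ[𝕜] F}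

theorem ker_eq_ker_of_norm_eq (h : ∀ x, ‖U x‖ = ‖T x‖) : ker T = ker U := by
  ext x
  rw [mem_ker, mem_ker, ← norm_eq_zero, ← h, norm_eq_zero]

variable (T U) in
noncomputable def rangeEquivOfNormEq (h : ∀ x, ‖U x‖ = ‖T x‖) : range T ≃ₗ[𝕜] range U :=
  T.quotKerEquivRange.symm ≪≫ₗ quotEquivOfEq _ _ (ker_eq_ker_of_norm_eq h) ≪≫ₗ
    U.quotKerEquivRange

theorem rangeEquivOfNormEq_apply (h : ∀ x, ‖U x‖ = ‖T x‖) (x : X) :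
    (rangeEquivOfNormEq T U h ⟨T x, mem_range_self T x⟩ : F) = U x := by
  simp [rangeEquivOfNormEq]

theorem norm_rangeEquivOfNormEq (h : ∀ x, ‖U x‖ = ‖T x‖) (y : range T) :
    ‖(rangeEquivOfNormEq T U h y : F)‖ = ‖(y : E)‖ := by
  obtain ⟨_, x, rfl⟩ := y
  rw [rangeEquivOfNormEq_apply, h]

theorem exists_linearIsometryEquiv_apply_eq_of_norm_eq [CompleteSpace E] [CompleteSpace F]
    (h : ∀ x, ‖U x‖ = ‖T x‖) (hT : Dense (range T : Set E)) (hU : Dense (range U : Set F)) :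
    ∃ V : E ≃ₗᵢ[𝕜] F, ∀ x, V (T x) = U x := by
  refine ⟨(rangeEquivOfNormEq T U h).extendOfIsometry (range T).subtype (range U).subtype
    hT.denseRange_val hU.denseRange_val (norm_rangeEquivOfNormEq h), fun x => ?_⟩
  exact (LinearEquiv.extendOfIsometry_eq _ _ _ _ _ _ (⟨T x, mem_range_self T x⟩ : range T)).trans
    (rangeEquivOfNormEq_apply h x)

end LinearMap

section InnerProductSpace

variable {𝕜 ι E F : Type*} [RCLike 𝕜]
  [NormedAddCommGroup E] [InnerProductSpace 𝕜 E] [NormedAddCommGroup F] [InnerProductSpace 𝕜 F]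
  {v : ι → E} {w : ι → F}

theorem inner_linearCombination_eq_of_inner_eq
    (h : ∀ i j, inner 𝕜 (v i) (v j) = inner 𝕜 (w i) (w j)) (c d : ι →₀ 𝕜) :
    inner 𝕜 (linearCombination 𝕜 v c) (linearCombination 𝕜 v d) =
      inner 𝕜 (linearCombination 𝕜 w c) (linearCombination 𝕜 w d) := by
  simp [linearCombination_apply, Finsupp.sum_inner, Finsupp.inner_sum, inner_smul_left,
    inner_smul_right, h]

theorem norm_linearCombination_eq_of_inner_eq
    (h : ∀ i j, inner 𝕜 (v i) (v j) = inner 𝕜 (w i) (w j)) (c : ι →₀ 𝕜) :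
    ‖linearCombination 𝕜 w c‖ = ‖linearCombination 𝕜 v c‖ := by
  have := inner_linearCombination_eq_of_inner_eq h c c
  rw [inner_self_eq_norm_sq_to_K, inner_self_eq_norm_sq_to_K] at this
  exact (sq_eq_sq₀ (norm_nonneg _) (norm_nonneg _)).mp (by exact_mod_cast this.symm)

theorem exists_linearIsometryEquiv_apply_eq_of_inner_eq [CompleteSpace E] [CompleteSpace F]
    (h : ∀ i j, inner 𝕜 (v i) (v j) = inner 𝕜 (w i) (w j))
    (hv : Dense (span 𝕜 (Set.range v) : Set E)) (hw : Dense (span 𝕜 (Set.range w) : Set F)) :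
    ∃ V : E ≃ₗᵢ[𝕜] F, ∀ i, V (v i) = w i := by
  rw [← range_linearCombination] at hv hw
  obtain ⟨V, hV⟩ := LinearMap.exists_linearIsometryEquiv_apply_eq_of_norm_eq
    (norm_linearCombination_eq_of_inner_eq h) hv hw
  exact ⟨V, fun i => by simpa using hV (single i 1)⟩

end InnerProductSpace

theorem oneParticleStructure_unique_general {S : Type*} [AddCommGroup S] [Module ℝ S]
    (σ μ : S →ₗ[ℝ] S →ₗ[ℝ] ℝ)
    {H : Type*} [NormedAddCommGroup H] [InnerProductSpace ℂ H] [CompleteSpace H]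
    {H' : Type*} [NormedAddCommGroup H'] [InnerProductSpace ℂ H'] [CompleteSpace H']
    (K : S → H) (K' : S → H')
    (hKdense : Dense ((Submodule.span ℂ (Set.range K) : Submodule ℂ H) : Set H))
    (hKinner : ∀ x y : S,
      (inner ℂ (K x) (K y) : ℂ) = (μ x y : ℂ) + (Complex.I / 2) * (σ x y : ℂ))
    (hK'dense : Dense ((Submodule.span ℂ (Set.range K') : Submodule ℂ H') : Set H'))
    (hK'inner : ∀ x y : S,
      (inner ℂ (K' x) (K' y) : ℂ) = (μ x y : ℂ) + (Complex.I / 2) * (σ x y : ℂ)) :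
    ∃ V : H →ₗᵢ[ℂ] H', Function.Surjective V ∧ ∀ x : S, V (K x) = K' x := by
  obtain ⟨V, hV⟩ := exists_linearIsometryEquiv_apply_eq_of_inner_eq
    (fun x y => by rw [hKinner, hK'inner]) hKdense hK'dense
  exact ⟨V.toLinearIsometry, V.surjective, hV⟩

/-- Uniqueness of the one-particle structure (Kay–Wald): two one-particle structures
`(K, H)` and `(K', H')` for the same data `(S, σ, μ)` are related by a surjective `ℂ`-linear
isometry `V : H → H'` with `V ∘ K = K'`. -/
theorem oneParticleStructure_unique {S : Type*} [AddCommGroup S] [Module ℝ S]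
    (σ μ : S →ₗ[ℝ] S →ₗ[ℝ] ℝ)
    (hσ : ∀ x y : S, σ x y = - σ y x)
    (hμsymm : ∀ x y : S, μ x y = μ y x)
    (hμpos : ∀ x : S, 0 ≤ μ x x)
    (hμdef : ∀ x : S, μ x x = 0 → x = 0)
    (hineq : ∀ x y : S, (1 / 4) * (σ x y) ^ 2 ≤ μ x x * μ y y)
    {H : Type*} [NormedAddCommGroup H] [InnerProductSpace ℂ H] [CompleteSpace H]
    {H' : Type*} [NormedAddCommGroup H'] [InnerProductSpace ℂ H'] [CompleteSpace H']
    (K : S → H) (K' : S → H')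
    (hKadd : ∀ x y : S, K (x + y) = K x + K y)
    (hKsmul : ∀ (r : ℝ) (x : S), K (r • x) = r • K x)
    (hKdense : Dense ((Submodule.span ℂ (Set.range K) : Submodule ℂ H) : Set H))
    (hKinner : ∀ x y : S,
      (inner ℂ (K x) (K y) : ℂ) = (μ x y : ℂ) + (Complex.I / 2) * (σ x y : ℂ))
    (hK'add : ∀ x y : S, K' (x + y) = K' x + K' y)
    (hK'smul : ∀ (r : ℝ) (x : S), K' (r • x) = r • K' x)
    (hK'dense : Dense ((Submodule.span ℂ (Set.range K') : Submodule ℂ H') : Set H'))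
    (hK'inner : ∀ x y : S,
      (inner ℂ (K' x) (K' y) : ℂ) = (μ x y : ℂ) + (Complex.I / 2) * (σ x y : ℂ)) :
    ∃ V : H →ₗᵢ[ℂ] H', Function.Surjective V ∧ ∀ x : S, V (K x) = K' x :=
  oneParticleStructure_unique_general σ μ K K' hKdense hKinner hK'dense hK'inner
end
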